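/- arXiv:1108.4059 — 4 statements merged into one kernel-verified Lean document; each statement's English description precedes it below -/
import Mathlib

section
/- The vector of Poisson weights x_k = e^{-λ/(α+γ)} (λ/(α+γ))^k / k! (k = 0,1,2,...) is an equilibrium of the infinite-dimensional ODE system ẋ_k = α(∑_ℓ (ℓ-k) x_ℓ) x_k + λ(x_{k-1} - x_k) + γ((k+1)x_{k+1} - k x_k); that is, the right-hand side vanishes for every k when the x_k are these Poisson weights. -/
open Real

/-! The Poisson weights `p k = e^{-μ} μ^k / k!` satisfy the detailed-balance relation
`(k + 1) p (k + 1) = μ p k`; it makes the mean `μ`, and with `λ = μ (α + γ)` it turns the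
mutation and compensation terms into `-α (μ - k) p k`, which cancels the selection term. -/

noncomputable def poissonWeight (μ : ℝ) (k : ℕ) : ℝ :=
  exp (-μ) * μ ^ k / (Nat.factorial k : ℝ)

theorem succ_mul_poissonWeight_succ (μ : ℝ) (k : ℕ) :
    ((k : ℝ) + 1) * poissonWeight μ (k + 1) = μ * poissonWeight μ k := by
  simp only [poissonWeight, Nat.factorial_succ, Nat.cast_mul, Nat.cast_succ, pow_succ]
  have : (Nat.factorial k : ℝ) ≠ 0 := by positivity
  field_simp

theorem mul_poissonWeight_pred (μ : ℝ) (k : ℕ) :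
    μ * (if k = 0 then 0 else poissonWeight μ (k - 1)) = k * poissonWeight μ k := by
  rcases k with _ | k
  · simp
  · simpa using (succ_mul_poissonWeight_succ μ k).symm

theorem hasSum_poissonWeight (μ : ℝ) : HasSum (poissonWeight μ) 1 := by
  have h : HasSum (fun k : ℕ => exp (-μ) * (μ ^ k / (Nat.factorial k : ℝ))) (exp (-μ) * exp μ) := by
    rw [Real.exp_eq_exp_ℝ]
    exact (NormedSpace.expSeries_div_hasSum_exp μ).mul_left _
  rw [← exp_add, neg_add_cancel, exp_zero] at h
  simp only [← mul_div_assoc] at h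
  exact h

theorem hasSum_mul_poissonWeight (μ : ℝ) :
    HasSum (fun k : ℕ => (k : ℝ) * poissonWeight μ k) μ := by
  rw [← hasSum_nat_add_iff' 1]
  simpa [succ_mul_poissonWeight_succ] using (hasSum_poissonWeight μ).mul_left μ

theorem tsum_sub_mul_poissonWeight (μ c : ℝ) :
    ∑' k : ℕ, ((k : ℝ) - c) * poissonWeight μ k = μ - c := by
  simp_rw [sub_mul]
  simpa using ((hasSum_mul_poissonWeight μ).sub ((hasSum_poissonWeight μ).mul_left c)).tsum_eq

theorem poisson_equilibrium_general (α lam γ : ℝ)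
    (hαγ : 0 < α + γ)
    (x : ℕ → ℝ) (hx : ∀ k : ℕ, x k = Real.exp (-(lam / (α + γ))) * (lam / (α + γ)) ^ k / (Nat.factorial k : ℝ)) :
    ∀ k : ℕ,
      α * (∑' ℓ : ℕ, ((ℓ : ℝ) - k) * x ℓ) * x k
        + lam * ((if k = 0 then 0 else x (k - 1)) - x k)
        + γ * ((k + 1 : ℝ) * x (k + 1) - (k : ℝ) * x k) = 0 := by
  obtain rfl : x = poissonWeight (lam / (α + γ)) := funext hx
  set μ := lam / (α + γ)
  have hlam : lam = μ * (α + γ) := (div_mul_cancel₀ _ hαγ.ne').symm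
  intro k
  rw [tsum_sub_mul_poissonWeight]
  linear_combination ((if k = 0 then 0 else poissonWeight μ (k - 1)) - poissonWeight μ k) * hlam
    + (α + γ) * mul_poissonWeight_pred μ k + γ * succ_mul_poissonWeight_succ μ k

/-- The Poisson weights with parameter `λ/(α+γ)` are an equilibrium of the
infinite-dimensional ODE system of Muller's ratchet with compensatory mutations. -/
theorem poisson_equilibrium (α lam γ : ℝ) (hα : 0 ≤ α) (hlam : 0 ≤ lam) (hγ : 0 ≤ γ)
    (hαγ : 0 < α + γ)
    (x : ℕ → ℝ) (hx : ∀ k : ℕ, x k = Real.exp (-(lam / (α + γ))) * (lam / (α + γ)) ^ k / (Nat.factorial k : ℝ)) :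
    ∀ k : ℕ,
      α * (∑' ℓ : ℕ, ((ℓ : ℝ) - k) * x ℓ) * x k
        + lam * ((if k = 0 then 0 else x (k - 1)) - x k)
        + γ * ((k + 1 : ℝ) * x (k + 1) - (k : ℝ) * x k) = 0 :=
  poisson_equilibrium_general α lam γ hαγ x hx
end

section
/- Let (x(t))_{t≥0} be a solution of ẋ_k = α(∑_ℓ(ℓ-k)x_ℓ)x_k + λ(x_{k-1}-x_k) + γ((k+1)x_{k+1} - kx_k) taking values in S_ξ, such that all term-wise differentiations are justified. Then for 0 < ζ < ξ, d/dt log h_ζ(x(t)) = α ∑_ℓ ℓ x_ℓ(t) + λ(e^ζ - 1) - (α + γ(1 - e^{-ζ})) (d/dζ) log h_ζ(x(t)). -/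
/-!
Multiply the equation for `x_k` by `e^{ζk}` and sum over `k`. Since `∑ x_ℓ = 1`, the selection
term is `α (κ₁ - k) x_k`; the immigration term shifts the index up and contributes
`λ (e^ζ - 1) h_ζ`, the death term shifts it down and contributes `γ (e^{-ζ} - 1) ∑ k x_k e^{ζk}`.
Hence `ḣ_ζ = (α κ₁ + λ (e^ζ - 1)) h_ζ - (α + γ (1 - e^{-ζ})) ∂_ζ h_ζ`, and dividing by `h_ζ > 0`
gives the claim. All series converge because `k e^{ζk} ≤ e^{ξk} / (ξ - ζ)` for `ζ < ξ`.
-/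

open Real

noncomputable def vectorField (α lam γ : ℝ) (p : ℕ → ℝ) (k : ℕ) : ℝ :=
  α * (∑' ℓ : ℕ, ((ℓ : ℝ) - k) * p ℓ) * p k
    + lam * ((if k = 0 then 0 else p (k - 1)) - p k)
    + γ * (((k : ℝ) + 1) * p (k + 1) - (k : ℝ) * p k)

section WeightedSums

variable {p : ℕ → ℝ} {ζ ξ : ℝ}

lemma natCast_mul_exp_le (k : ℕ) (h : ζ < ξ) :
    (k : ℝ) * exp (ζ * k) ≤ (ξ - ζ)⁻¹ * exp (ξ * k) := by
  have hd : 0 < ξ - ζ := sub_pos.2 h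
  have hlin : (ξ - ζ) * k ≤ exp ((ξ - ζ) * k) := by
    linarith [add_one_le_exp ((ξ - ζ) * k)]
  have hsplit : exp ((ξ - ζ) * k) * exp (ζ * k) = exp (ξ * k) := by
    rw [← exp_add]; ring_nf
  rw [le_inv_mul_iff₀ hd, ← hsplit, ← mul_assoc]
  exact mul_le_mul_of_nonneg_right hlin (exp_pos _).le

lemma summable_mul_exp_of_le (hp : ∀ k, 0 ≤ p k) (hξ : Summable fun k : ℕ => p k * exp (ξ * k))
    (h : ζ ≤ ξ) : Summable fun k : ℕ => p k * exp (ζ * k) :=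
  hξ.of_nonneg_of_le (fun k => mul_nonneg (hp k) (exp_pos _).le) fun k =>
    mul_le_mul_of_nonneg_left (exp_le_exp.2 (mul_le_mul_of_nonneg_right h k.cast_nonneg)) (hp k)

lemma summable_natCast_mul_mul_exp (hp : ∀ k, 0 ≤ p k)
    (hξ : Summable fun k : ℕ => p k * exp (ξ * k)) (h : ζ < ξ) :
    Summable fun k : ℕ => k * p k * exp (ζ * k) :=
  (hξ.mul_left (ξ - ζ)⁻¹).of_nonneg_of_le
    (fun k => mul_nonneg (mul_nonneg k.cast_nonneg (hp k)) (exp_pos _).le) fun k => by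
      calc (k : ℝ) * p k * exp (ζ * k) = p k * (k * exp (ζ * k)) := by ring
        _ ≤ p k * ((ξ - ζ)⁻¹ * exp (ξ * k)) :=
          mul_le_mul_of_nonneg_left (natCast_mul_exp_le k h) (hp k)
        _ = (ξ - ζ)⁻¹ * (p k * exp (ξ * k)) := by ring

lemma tsum_mul_exp_pos (hp : ∀ k, 0 ≤ p k) (hp1 : ∑' k, p k = 1)
    (hζ : Summable fun k : ℕ => p k * exp (ζ * k)) : 0 < ∑' k : ℕ, p k * exp (ζ * k) := by
  obtain ⟨i, hi⟩ : ∃ i, 0 < p i := by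
    by_contra! hzero
    have : p = 0 := funext fun k => le_antisymm (hzero k) (hp k)
    simp [this] at hp1
  exact hζ.tsum_pos (fun k => mul_nonneg (hp k) (exp_pos _).le) i (mul_pos hi (exp_pos _))

lemma hasSum_shiftRight_mul_exp {a : ℝ} (h : HasSum (fun k : ℕ => p k * exp (ζ * k)) a) :
    HasSum (fun k : ℕ => (if k = 0 then 0 else p (k - 1)) * exp (ζ * k)) (exp ζ * a) := by
  rw [← hasSum_nat_add_iff' 1]
  simpa [mul_add, exp_add, mul_comm, mul_left_comm] using h.mul_left (exp ζ)

lemma hasSum_shiftLeft_mul_exp {a : ℝ} (h : HasSum (fun k : ℕ => k * p k * exp (ζ * k)) a) :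
    HasSum (fun k : ℕ => ((k : ℝ) + 1) * p (k + 1) * exp (ζ * k)) (exp (-ζ) * a) := by
  have hshift := ((hasSum_nat_add_iff' 1).2 h).mul_left (exp (-ζ))
  simp only [Finset.range_one, Finset.sum_singleton, Nat.cast_zero, zero_mul, sub_zero,
    Nat.cast_add, Nat.cast_one] at hshift
  refine hshift.congr_fun fun k => ?_
  rw [show exp (ζ * k) = exp (-ζ) * exp (ζ * (k + 1)) by rw [← exp_add]; ring_nf]
  ring

lemma tsum_natCast_sub_mul (hp : HasSum p 1) (hm : Summable fun ℓ : ℕ => (ℓ : ℝ) * p ℓ)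
    (k : ℕ) : ∑' ℓ : ℕ, ((ℓ : ℝ) - k) * p ℓ = ∑' ℓ : ℕ, (ℓ : ℝ) * p ℓ - k := by
  simpa only [mul_one, sub_mul] using (hm.hasSum.sub (hp.mul_left (k : ℝ))).tsum_eq

lemma hasSum_vectorField_mul_exp (α lam γ : ℝ) (hp : HasSum p 1)
    (hm : Summable fun ℓ : ℕ => (ℓ : ℝ) * p ℓ) (hh : Summable fun k : ℕ => p k * exp (ζ * k))
    (hK : Summable fun k : ℕ => k * p k * exp (ζ * k)) :
    HasSum (fun k : ℕ => vectorField α lam γ p k * exp (ζ * k))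
      ((α * ∑' ℓ : ℕ, (ℓ : ℝ) * p ℓ + lam * (exp ζ - 1)) * ∑' k : ℕ, p k * exp (ζ * k)
        - (α + γ * (1 - exp (-ζ))) * ∑' k : ℕ, k * p k * exp (ζ * k)) := by
  set M := ∑' ℓ : ℕ, (ℓ : ℝ) * p ℓ
  have hsplit := ((hh.hasSum.mul_left (α * M - lam)).add (hK.hasSum.mul_left (-(α + γ)))).add
    (((hasSum_shiftRight_mul_exp hh.hasSum).mul_left lam).add
      ((hasSum_shiftLeft_mul_exp hK.hasSum).mul_left γ))
  rw [show ∀ h K : ℝ, (α * M + lam * (exp ζ - 1)) * h - (α + γ * (1 - exp (-ζ))) * K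
      = (α * M - lam) * h + -(α + γ) * K + (lam * (exp ζ * h) + γ * (exp (-ζ) * K)) by
    intros; ring]
  refine hsplit.congr_fun fun k => ?_
  rw [vectorField, tsum_natCast_sub_mul hp hm]
  ring

end WeightedSums

theorem cumulant_dynamics_general (α lam γ ξ ζ : ℝ)
    (hζ0 : 0 < ζ) (hζξ : ζ < ξ)
    (x : ℝ → ℕ → ℝ) (t : ℝ)
    (hpos : ∀ s k, 0 ≤ x s k) (hsum1 : ∀ s, (∑' k, x s k) = 1)
    (hexp : ∀ s, Summable (fun k : ℕ => x s k * Real.exp (ξ * k)))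
    -- termwise differentiation of `h_ζ` is justified:
    (hterm : HasDerivAt (fun s => ∑' k : ℕ, x s k * Real.exp (ζ * k))
        (∑' k : ℕ,
          (α * (∑' ℓ : ℕ, ((ℓ : ℝ) - k) * x t ℓ) * x t k
            + lam * ((if k = 0 then 0 else x t (k - 1)) - x t k)
            + γ * (((k : ℝ) + 1) * x t (k + 1) - (k : ℝ) * x t k)) * Real.exp (ζ * k)) t) :
    HasDerivAt (fun s => Real.log (∑' k : ℕ, x s k * Real.exp (ζ * k)))
      (α * (∑' ℓ : ℕ, (ℓ : ℝ) * x t ℓ) + lam * (Real.exp ζ - 1)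
        - (α + γ * (1 - Real.exp (-ζ)))
          * ((∑' k : ℕ, (k : ℝ) * x t k * Real.exp (ζ * k))
              / (∑' k : ℕ, x t k * Real.exp (ζ * k)))) t := by
  have hp : HasSum (x t) 1 := by
    have hs : Summable (x t) := by_contra fun h =>
      zero_ne_one ((tsum_eq_zero_of_not_summable h).symm.trans (hsum1 t))
    exact hsum1 t ▸ hs.hasSum
  have hm : Summable fun ℓ : ℕ => (ℓ : ℝ) * x t ℓ := by
    simpa using summable_natCast_mul_mul_exp (hpos t) (hexp t) (hζ0.trans hζξ)
  have hh := summable_mul_exp_of_le (hpos t) (hexp t) hζξ.le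
  have hK := summable_natCast_mul_mul_exp (hpos t) (hexp t) hζξ
  change HasDerivAt _ (∑' k : ℕ, vectorField α lam γ (x t) k * exp (ζ * k)) t at hterm
  rw [(hasSum_vectorField_mul_exp α lam γ hp hm hh hK).tsum_eq] at hterm
  have hh_ne := (tsum_mul_exp_pos (hpos t) (hsum1 t) hh).ne'
  convert hterm.log hh_ne using 1
  field_simp

/-- Dynamics of the cumulant generating function: for a solution of the infinite-dimensional
ODE system with values in `S_ξ` (termwise differentiation being justified), for `0 < ζ < ξ`,
`d/dt log h_ζ(x(t)) = α κ₁(x(t)) + λ(e^ζ - 1) - (α + γ(1 - e^{-ζ})) ∂_ζ log h_ζ(x(t))`. -/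
theorem cumulant_dynamics (α lam γ ξ ζ : ℝ) (hα : 0 ≤ α) (hlam : 0 ≤ lam) (hγ : 0 ≤ γ)
    (hζ0 : 0 < ζ) (hζξ : ζ < ξ)
    (x : ℝ → ℕ → ℝ) (t : ℝ)
    (hpos : ∀ s k, 0 ≤ x s k) (hsum1 : ∀ s, (∑' k, x s k) = 1)
    (hexp : ∀ s, Summable (fun k : ℕ => x s k * Real.exp (ξ * k)))
    (hode : ∀ s (k : ℕ), HasDerivAt (fun u => x u k)
        (α * (∑' ℓ : ℕ, ((ℓ : ℝ) - k) * x s ℓ) * x s k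
          + lam * ((if k = 0 then 0 else x s (k - 1)) - x s k)
          + γ * (((k : ℝ) + 1) * x s (k + 1) - (k : ℝ) * x s k)) s)
    -- termwise differentiation of `h_ζ` is justified:
    (hterm : HasDerivAt (fun s => ∑' k : ℕ, x s k * Real.exp (ζ * k))
        (∑' k : ℕ,
          (α * (∑' ℓ : ℕ, ((ℓ : ℝ) - k) * x t ℓ) * x t k
            + lam * ((if k = 0 then 0 else x t (k - 1)) - x t k)
            + γ * (((k : ℝ) + 1) * x t (k + 1) - (k : ℝ) * x t k)) * Real.exp (ζ * k)) t) :
    HasDerivAt (fun s => Real.log (∑' k : ℕ, x s k * Real.exp (ζ * k)))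
      (α * (∑' ℓ : ℕ, (ℓ : ℝ) * x t ℓ) + lam * (Real.exp ζ - 1)
        - (α + γ * (1 - Real.exp (-ζ)))
          * ((∑' k : ℕ, (k : ℝ) * x t k * Real.exp (ζ * k))
              / (∑' k : ℕ, x t k * Real.exp (ζ * k)))) t :=
  cumulant_dynamics_general α lam γ ξ ζ hζ0 hζξ x t hpos hsum1 hexp hterm
end

section
/- For γ > 0, λ ≥ 0 and any k ∈ ℕ₀, the explicit formula x_k(t) given in the paper converges as t → ∞ to the Poisson weight e^{-λ/(α+γ)} (λ/(α+γ))^k / k!. Concretely: with a = α+γ > 0 and any probability vector (x_i(0)) on ℕ₀ with ∑_i x_i(0) e^{ξi} < ∞ for some ξ > 0, define N_k(t) = ∑_{i=0}^∞ x_i(0) ∑_{j=0}^{i∧k} C(i,j) ((γ(1-e^{-at}))/a)^{i-j} e^{-jat} (λ(1-e^{-at})/a)^{k-j}/(k-j)! and D(t) = ∑_{i=0}^∞ x_i(0) (γ/a - (α/a)e^{-at})^i · exp((λ/a)(1-e^{-at})). Then N_k(t)/D(t) → e^{-λ/a}(λ/a)^k/k! as t → ∞. -/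
/-!
With `u = e^{-at} ∈ (0, 1]`, the `i`-th terms of numerator and denominator are `x_i(0)` times
quantities bounded by `e^{λ/a}`: in the numerator by the binomial theorem,
`∑_j C(i,j) (p(1-u))^{i-j} u^j ≤ (u + p(1-u))^i ≤ 1`, together with `b^m/m! ≤ e^b`.
Since `(x_i(0))` is summable, Tannery's theorem lets `u → 0` termwise, where only the `j = 0`
terms survive. Both limits carry the factor `∑_i x_i(0) (γ/a)^i`, positive because `γ > 0`,
which cancels in the quotient.
-/

open Real Filter Finset Topology

/-- The inner sum of `N_k(t)` is `binomialPoissonSum i k (γ(1-u)/a) u (λ(1-u)/a)` with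
`u = e^{-at}`. -/
noncomputable def binomialPoissonSum (i k : ℕ) (p u b : ℝ) : ℝ :=
  ∑ j ∈ range (min i k + 1),
    (i.choose j : ℝ) * p ^ (i - j) * u ^ j * b ^ (k - j) / (Nat.factorial (k - j) : ℝ)

theorem binomialPoissonSum_zero_middle (i k : ℕ) (p b : ℝ) :
    binomialPoissonSum i k p 0 b = p ^ i * (b ^ k / (Nat.factorial k : ℝ)) := by
  rw [binomialPoissonSum, sum_eq_single_of_mem 0 (mem_range.mpr (Nat.succ_pos _))]
  · simp [mul_div_assoc]
  · intro j _ hj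
    simp [hj]

theorem binomialPoissonSum_nonneg (i k : ℕ) {p u b : ℝ} (hp : 0 ≤ p) (hu : 0 ≤ u) (hb : 0 ≤ b) :
    0 ≤ binomialPoissonSum i k p u b :=
  sum_nonneg fun _ _ => by positivity

theorem binomialPoissonSum_le (i k : ℕ) {p u b : ℝ} (hp : 0 ≤ p) (hu : 0 ≤ u) (hb : 0 ≤ b) :
    binomialPoissonSum i k p u b ≤ (u + p) ^ i * exp b := by
  rw [add_pow, sum_mul]
  calc binomialPoissonSum i k p u b
      ≤ ∑ j ∈ range (min i k + 1), u ^ j * p ^ (i - j) * (i.choose j : ℝ) * exp b := by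
        refine sum_le_sum fun j _ => ?_
        have := pow_div_factorial_le_exp b hb (k - j)
        calc (i.choose j : ℝ) * p ^ (i - j) * u ^ j * b ^ (k - j) / (Nat.factorial (k - j) : ℝ)
            = u ^ j * p ^ (i - j) * (i.choose j : ℝ) * (b ^ (k - j) / (k - j).factorial) := by
              ring
          _ ≤ _ := by gcongr
    _ ≤ ∑ j ∈ range (i + 1), u ^ j * p ^ (i - j) * (i.choose j : ℝ) * exp b :=
        sum_le_sum_of_subset_of_nonneg (range_subset_range.mpr (by omega))
          fun _ _ _ => by positivity

theorem tendsto_tsum_mul_of_bounded {α ι : Type*} {l : Filter α} {w : ι → ℝ} (hw : Summable w)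
    {F : α → ι → ℝ} {g : ι → ℝ} {C : ℝ} (hF : ∀ i, Tendsto (F · i) l (𝓝 (g i)))
    (hC : ∀ᶠ t in l, ∀ i, |F t i| ≤ C) :
    Tendsto (fun t => ∑' i, w i * F t i) l (𝓝 (∑' i, w i * g i)) :=
  tendsto_tsum_of_dominated_convergence (bound := fun i => |w i| * C) (hw.abs.mul_right C)
    (fun i => (hF i).const_mul (w i))
    (hC.mono fun t ht i => by
      rw [Real.norm_eq_abs, abs_mul]
      exact mul_le_mul_of_nonneg_left (ht i) (abs_nonneg _))

theorem tendsto_tsum_binomialPoissonSum {w : ℕ → ℝ} (hw : Summable w) {p b : ℝ} (hp : 0 ≤ p)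
    (hp1 : p ≤ 1) (hb : 0 ≤ b) (k : ℕ) :
    Tendsto (fun u => ∑' i, w i * binomialPoissonSum i k (p * (1 - u)) u (b * (1 - u)))
      (𝓝[Set.Icc 0 1] 0) (𝓝 ((∑' i, w i * p ^ i) * (b ^ k / (Nat.factorial k : ℝ)))) := by
  simp only [← tsum_mul_right, mul_assoc]
  refine tendsto_tsum_mul_of_bounded hw (C := exp b) (fun i => ?_) ?_
  · have hcont : Continuous fun u => binomialPoissonSum i k (p * (1 - u)) u (b * (1 - u)) := by
      unfold binomialPoissonSum; fun_prop
    simpa [binomialPoissonSum_zero_middle] using (hcont.tendsto 0).mono_left nhdsWithin_le_nhds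
  · filter_upwards [self_mem_nhdsWithin] with u ⟨hu0, hu1⟩ i
    have hp' : 0 ≤ p * (1 - u) := mul_nonneg hp (by linarith)
    have hb' : 0 ≤ b * (1 - u) := mul_nonneg hb (by linarith)
    rw [abs_of_nonneg (binomialPoissonSum_nonneg i k hp' hu0 hb')]
    calc binomialPoissonSum i k (p * (1 - u)) u (b * (1 - u))
        ≤ (u + p * (1 - u)) ^ i * exp (b * (1 - u)) := binomialPoissonSum_le i k hp' hu0 hb'
      _ ≤ 1 ^ i * exp b := by
        gcongr
        · nlinarith
        · nlinarith
      _ = exp b := by rw [one_pow, one_mul]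

theorem tendsto_tsum_pow_mul_exp {w : ℕ → ℝ} (hw : Summable w) {p q b : ℝ} (hp : 0 ≤ p)
    (hp1 : p ≤ 1) (hq : 0 ≤ q) (hq1 : q ≤ 1) (hb : 0 ≤ b) :
    Tendsto (fun u => ∑' i, w i * (p - q * u) ^ i * exp (b * (1 - u)))
      (𝓝[Set.Icc 0 1] 0) (𝓝 ((∑' i, w i * p ^ i) * exp b)) := by
  simp only [← tsum_mul_right, mul_assoc]
  refine tendsto_tsum_mul_of_bounded hw (C := exp b) (fun i => ?_) ?_
  · have hcont : Continuous fun u => (p - q * u) ^ i * exp (b * (1 - u)) := by fun_prop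
    simpa using (hcont.tendsto 0).mono_left nhdsWithin_le_nhds
  · filter_upwards [self_mem_nhdsWithin] with u ⟨hu0, hu1⟩ i
    have hbase : |p - q * u| ≤ 1 := abs_le.mpr ⟨by nlinarith, by nlinarith⟩
    rw [abs_mul, abs_pow, abs_of_pos (exp_pos _)]
    calc |p - q * u| ^ i * exp (b * (1 - u)) ≤ 1 ^ i * exp b := by
          gcongr
          nlinarith
      _ = exp b := by rw [one_pow, one_mul]

theorem tendsto_exp_neg_mul_nhdsWithin_Icc {a : ℝ} (ha : 0 < a) :
    Tendsto (fun t => exp (-(a * t))) atTop (𝓝[Set.Icc 0 1] 0) := by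
  refine tendsto_nhdsWithin_iff.mpr ⟨?_, ?_⟩
  · exact tendsto_exp_atBot.comp (tendsto_neg_atTop_atBot.comp (tendsto_id.const_mul_atTop ha))
  · filter_upwards [eventually_ge_atTop 0] with t ht
    exact ⟨(exp_pos _).le, exp_le_one_iff.mpr (by nlinarith)⟩

theorem explicit_solution_limit_general (α lam γ : ℝ) (hα : 0 ≤ α) (hlam : 0 ≤ lam) (hγ : 0 < γ)
    (x0 : ℕ → ℝ) (hpos : ∀ i, 0 ≤ x0 i) (hsum : (∑' i, x0 i) = 1)
    (k : ℕ) :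
    Filter.Tendsto
      (fun t : ℝ =>
        (∑' i : ℕ, x0 i * ∑ j ∈ Finset.range (min i k + 1),
            (i.choose j : ℝ)
              * (γ * (1 - Real.exp (-((α + γ) * t))) / (α + γ)) ^ (i - j)
              * Real.exp (-(j * (α + γ) * t))
              * (lam * (1 - Real.exp (-((α + γ) * t))) / (α + γ)) ^ (k - j)
              / (Nat.factorial (k - j) : ℝ))
          / (∑' i : ℕ, x0 i
              * (γ / (α + γ) - α / (α + γ) * Real.exp (-((α + γ) * t))) ^ i
              * Real.exp (lam / (α + γ) * (1 - Real.exp (-((α + γ) * t))))))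
      Filter.atTop
      (nhds (Real.exp (-(lam / (α + γ))) * (lam / (α + γ)) ^ k / (Nat.factorial k : ℝ))) := by
  set a := α + γ
  have ha : 0 < a := by positivity
  -- a non-summable family would have `tsum` equal to `0`
  have hx0 : Summable x0 := by
    by_contra h
    exact zero_ne_one (tsum_eq_zero_of_not_summable h ▸ hsum)
  have hγa : γ / a ≤ 1 := (div_le_one ha).mpr (by linarith)
  have hαa : α / a ≤ 1 := (div_le_one ha).mpr (by linarith)
  set S := ∑' i, x0 i * (γ / a) ^ i
  have hS : 0 < S := by
    obtain ⟨i, hi⟩ : ∃ i, x0 i ≠ 0 := by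
      by_contra! h
      simp [h] at hsum
    have hterm (i : ℕ) : 0 ≤ x0 i * (γ / a) ^ i := mul_nonneg (hpos i) (by positivity)
    exact Summable.tsum_pos (hx0.of_nonneg_of_le hterm
      fun i => mul_le_of_le_one_right (hpos i) (pow_le_one₀ (by positivity) hγa))
      hterm i (mul_pos ((hpos i).lt_of_ne' hi) (by positivity))
  have hu := tendsto_exp_neg_mul_nhdsWithin_Icc ha
  have hla : 0 ≤ lam / a := by positivity
  have hN := (tendsto_tsum_binomialPoissonSum hx0 (by positivity) hγa hla k).comp hu
  have hD := (tendsto_tsum_pow_mul_exp hx0 (by positivity) hγa (by positivity) hαa hla).comp hu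
  have hlim : exp (-(lam / a)) * (lam / a) ^ k / (Nat.factorial k : ℝ)
      = S * ((lam / a) ^ k / (Nat.factorial k : ℝ)) / (S * exp (lam / a)) := by
    rw [exp_neg]
    field_simp
  rw [hlim]
  refine (hN.div hD (by positivity)).congr fun t => ?_
  have hexp_nat (j : ℕ) : exp (-(j * a * t)) = exp (-(a * t)) ^ j := by
    rw [← exp_nat_mul]; ring_nf
  simp only [Pi.div_apply, Function.comp_apply, binomialPoissonSum, hexp_nat, mul_div_right_comm γ,
    mul_div_right_comm lam]

/-- Convergence of the explicit solution formula to the Poisson equilibrium: with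
`a = α + γ > 0` and `γ > 0`, `N_k(t)/D(t) → e^{-λ/a} (λ/a)^k / k!` as `t → ∞`. -/
theorem explicit_solution_limit (α lam γ : ℝ) (hα : 0 ≤ α) (hlam : 0 ≤ lam) (hγ : 0 < γ)
    (x0 : ℕ → ℝ) (hpos : ∀ i, 0 ≤ x0 i) (hsum : (∑' i, x0 i) = 1)
    (hexp : ∃ ξ > 0, Summable (fun i : ℕ => x0 i * Real.exp (ξ * i)))
    (k : ℕ) :
    Filter.Tendsto
      (fun t : ℝ =>
        (∑' i : ℕ, x0 i * ∑ j ∈ Finset.range (min i k + 1),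
            (i.choose j : ℝ)
              * (γ * (1 - Real.exp (-((α + γ) * t))) / (α + γ)) ^ (i - j)
              * Real.exp (-(j * (α + γ) * t))
              * (lam * (1 - Real.exp (-((α + γ) * t))) / (α + γ)) ^ (k - j)
              / (Nat.factorial (k - j) : ℝ))
          / (∑' i : ℕ, x0 i
              * (γ / (α + γ) - α / (α + γ) * Real.exp (-((α + γ) * t))) ^ i
              * Real.exp (lam / (α + γ) * (1 - Real.exp (-((α + γ) * t))))))
      Filter.atTop
      (nhds (Real.exp (-(lam / (α + γ))) * (lam / (α + γ)) ^ k / (Nat.factorial k : ℝ))) :=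
  explicit_solution_limit_general α lam γ hα hlam hγ x0 hpos hsum k
end

section
/- Duality/integrated form: let (x(t))_{t≥0} be a solution of the cumulant equation d/dt log h_ζ(x(t)) = α κ₁(x(t)) + λ(e^ζ-1) - (α + γ(1-e^{-ζ})) ∂/∂ζ log h_ζ(x(t)) (valid for 0 < ζ < ξ), and let ζ(t) solve ζ' = -(α + γ(1-e^{-ζ})) with ζ(0) ∈ (0,ξ). Assume (t,ζ) ↦ log h_ζ(x(t)) is C¹ on the relevant domain. Then for all t ≥ 0: log h_{ζ(0)}(x(t)) = log h_{ζ(t)}(x(0)) + ∫_0^t (λ(e^{ζ(t-s)} - 1) + α κ₁(x(s))) ds. -/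
/-!
Along the backward characteristic `s ↦ (s, ζ (t - s))` the cumulant equation is a transport
equation: by the chain rule the derivative of `s ↦ g s (ζ (t - s))` is
`∂ₛ g + (α + γ (1 - e^{-ζ})) ∂_ζ g`, which the equation turns into the source term
`λ (e^ζ - 1) + α κ₁(x(s))`. Integrating over `[0, t]` (fundamental theorem of calculus, the
integrand being continuous since `g` is `C¹`) gives the duality formula.
-/

section PartialDerivatives

variable {g : ℝ → ℝ → ℝ}

theorem hasDerivAt_fst_of_differentiableAt {s z : ℝ}
    (h : DifferentiableAt ℝ (fun q : ℝ × ℝ => g q.1 q.2) (s, z)) :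
    HasDerivAt (fun u => g u z) (fderiv ℝ (fun q : ℝ × ℝ => g q.1 q.2) (s, z) (1, 0)) s := by
  exact h.hasFDerivAt.comp_hasDerivAt s ((hasDerivAt_id s).prodMk (hasDerivAt_const s z))

theorem hasDerivAt_snd_of_differentiableAt {s z : ℝ}
    (h : DifferentiableAt ℝ (fun q : ℝ × ℝ => g q.1 q.2) (s, z)) :
    HasDerivAt (fun w => g s w) (fderiv ℝ (fun q : ℝ × ℝ => g q.1 q.2) (s, z) (0, 1)) z :=
  h.hasFDerivAt.comp_hasDerivAt z ((hasDerivAt_const z s).prodMk (hasDerivAt_id z))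

theorem deriv_fst_add_mul_deriv_snd_eq_fderiv {s z : ℝ}
    (h : DifferentiableAt ℝ (fun q : ℝ × ℝ => g q.1 q.2) (s, z)) (c : ℝ) :
    deriv (fun u => g u z) s + c * deriv (fun w => g s w) z
      = fderiv ℝ (fun q : ℝ × ℝ => g q.1 q.2) (s, z) (1, c) := by
  have hsplit : ((1 : ℝ), c) = ((1 : ℝ), (0 : ℝ)) + c • ((0 : ℝ), (1 : ℝ)) := by simp
  rw [(hasDerivAt_fst_of_differentiableAt h).deriv, (hasDerivAt_snd_of_differentiableAt h).deriv,
    hsplit, map_add, map_smul, smul_eq_mul]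

theorem hasDerivAt_along_graph {φ : ℝ → ℝ} {φ' s : ℝ}
    (h : DifferentiableAt ℝ (fun q : ℝ × ℝ => g q.1 q.2) (s, φ s)) (hφ : HasDerivAt φ φ' s) :
    HasDerivAt (fun u => g u (φ u))
      (deriv (fun u => g u (φ s)) s + φ' * deriv (fun w => g s w) (φ s)) s := by
  rw [deriv_fst_add_mul_deriv_snd_eq_fderiv h]
  exact h.hasFDerivAt.comp_hasDerivAt s ((hasDerivAt_id s).prodMk hφ)

theorem integral_deriv_along_graph (hg : ContDiff ℝ 1 (fun q : ℝ × ℝ => g q.1 q.2))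
    {φ φ' : ℝ → ℝ} (hφ : ∀ s, HasDerivAt φ (φ' s) s) (hφ' : Continuous φ') (a b : ℝ) :
    ∫ s in a..b, (deriv (fun u => g u (φ s)) s + φ' s * deriv (fun w => g s w) (φ s))
      = g b (φ b) - g a (φ a) := by
  have hdiff := hg.differentiable one_ne_zero
  have hφc : Continuous φ := continuous_iff_continuousAt.2 fun s => (hφ s).continuousAt
  have hcont : Continuous fun s =>
      deriv (fun u => g u (φ s)) s + φ' s * deriv (fun w => g s w) (φ s) := by
    simp_rw [deriv_fst_add_mul_deriv_snd_eq_fderiv (hdiff _)]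
    exact ((hg.continuous_fderiv one_ne_zero).comp (continuous_id.prodMk hφc)).clm_apply
      (continuous_const.prodMk hφ')
  exact intervalIntegral.integral_eq_sub_of_hasDerivAt
    (fun s _ => hasDerivAt_along_graph (hdiff _) (hφ s)) (hcont.intervalIntegrable a b)

end PartialDerivatives

theorem hasDerivAt_comp_const_sub_of_autonomous {ζ : ℝ → ℝ} {v : ℝ → ℝ}
    (hζ : ∀ s, HasDerivAt ζ (-v (ζ s)) s) (t s : ℝ) :
    HasDerivAt (fun u => ζ (t - u)) (v (ζ (t - s))) s := by
  simpa using (hζ (t - s)).comp_const_sub t s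

theorem duality_integrated_general (α lam γ ξ : ℝ)
    (x : ℝ → ℕ → ℝ)
    (g : ℝ → ℝ → ℝ)
    (hC1 : ContDiff ℝ 1 (fun q : ℝ × ℝ => g q.1 q.2))
    (hpde : ∀ s z : ℝ, 0 < z → z < ξ →
      deriv (fun u => g u z) s
        = α * (∑' k : ℕ, (k : ℝ) * x s k) + lam * (Real.exp z - 1)
          - (α + γ * (1 - Real.exp (-z))) * deriv (fun w => g s w) z)
    (ζ : ℝ → ℝ)
    (hζode : ∀ s : ℝ, HasDerivAt ζ (-(α + γ * (1 - Real.exp (-(ζ s))))) s)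
    (hζrange : ∀ s : ℝ, 0 ≤ s → ζ s ∈ Set.Ioo 0 ξ)
    (t : ℝ) (ht : 0 ≤ t) :
    g t (ζ 0)
      = g 0 (ζ t)
        + ∫ s in (0:ℝ)..t,
            (lam * (Real.exp (ζ (t - s)) - 1) + α * ∑' k : ℕ, (k : ℝ) * x s k) := by
  set c : ℝ → ℝ := fun s => α + γ * (1 - Real.exp (-(ζ (t - s))))
  have hζcont : Continuous ζ := continuous_iff_continuousAt.2 fun s => (hζode s).continuousAt
  have hc : Continuous c := by fun_prop
  have hchar := hasDerivAt_comp_const_sub_of_autonomous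
    (v := fun z => α + γ * (1 - Real.exp (-z))) hζode t
  have htransport : Set.EqOn
      (fun s => lam * (Real.exp (ζ (t - s)) - 1) + α * ∑' k : ℕ, (k : ℝ) * x s k)
      (fun s => deriv (fun u => g u (ζ (t - s))) s
        + c s * deriv (fun w => g s w) (ζ (t - s))) (Set.uIcc 0 t) := by
    intro s hs
    rw [Set.uIcc_of_le ht] at hs
    obtain ⟨hz0, hzξ⟩ := hζrange (t - s) (by linarith [hs.2])
    simp only [c, hpde s _ hz0 hzξ]
    ring
  rw [intervalIntegral.integral_congr htransport, integral_deriv_along_graph hC1 hchar hc]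
  simp

/-- Duality / integrated form: if `g(t,ζ) = log h_ζ(x(t))` is `C¹` and satisfies the cumulant
PDE, and `ζ(·)` solves `ζ' = -(α + γ(1-e^{-ζ}))` with `ζ(0) ∈ (0,ξ)`, then
`log h_{ζ(0)}(x(t)) = log h_{ζ(t)}(x(0)) + ∫_0^t (λ(e^{ζ(t-s)}-1) + α κ₁(x(s))) ds`. -/
theorem duality_integrated (α lam γ ξ : ℝ) (hα : 0 ≤ α) (hlam : 0 ≤ lam) (hγ : 0 ≤ γ)
    (hξ : 0 < ξ)
    (x : ℝ → ℕ → ℝ)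
    (hpos : ∀ s k, 0 ≤ x s k) (hsum1 : ∀ s, (∑' k, x s k) = 1)
    (hexp : ∀ s, Summable (fun k : ℕ => x s k * Real.exp (ξ * k)))
    (g : ℝ → ℝ → ℝ)
    (hg : ∀ s z : ℝ, g s z = Real.log (∑' k : ℕ, x s k * Real.exp (z * k)))
    (hC1 : ContDiff ℝ 1 (fun q : ℝ × ℝ => g q.1 q.2))
    (hpde : ∀ s z : ℝ, 0 < z → z < ξ →
      deriv (fun u => g u z) s
        = α * (∑' k : ℕ, (k : ℝ) * x s k) + lam * (Real.exp z - 1)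
          - (α + γ * (1 - Real.exp (-z))) * deriv (fun w => g s w) z)
    (ζ : ℝ → ℝ) (hζ0 : ζ 0 ∈ Set.Ioo 0 ξ)
    (hζode : ∀ s : ℝ, HasDerivAt ζ (-(α + γ * (1 - Real.exp (-(ζ s))))) s)
    (hζrange : ∀ s : ℝ, 0 ≤ s → ζ s ∈ Set.Ioo 0 ξ)
    (t : ℝ) (ht : 0 ≤ t) :
    g t (ζ 0)
      = g 0 (ζ t)
        + ∫ s in (0:ℝ)..t,
            (lam * (Real.exp (ζ (t - s)) - 1) + α * ∑' k : ℕ, (k : ℝ) * x s k) :=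
  duality_integrated_general α lam γ ξ x g hC1 hpde ζ hζode hζrange t ht
end
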